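/- arXiv:1102.0338 — 2 statements merged into one kernel-verified Lean document; each statement's English description precedes it below -/
import Mathlib

section
/- Let f_0 be analytic on the unit disk 𝔻 with f_0(0) = 0, f_0'(0) = 1, f_0' nonvanishing, and satisfying 1 + z f_0''(z)/f_0'(z) = 1 + (2/π²)(Log((1+z)/(1−z)))² for all z ∈ 𝔻 (principal branch of the logarithm). Then the Schwarzian derivative of f_0 at the origin equals S_{f_0}(0) = 8/π²; consequently sup_{z∈𝔻}(1−|z|²)²|S_{f_0}(z)| ≥ 8/π², so the bound ‖S_f‖ ≤ 8/π² for uniformly convex functions is sharp. -/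
/-!
Near `0` the equation reads `z f'' = c L² f'` with `c = 2/π²` and
`L(z) = log((1+z)/(1-z)) = 2z + O(z³)`; dividing by `z` and letting `z → 0` gives `f''(0) = 0` and
`f'''(0) = 4c f'(0)`, so `S_f(0) = 4c = 8/π²`.

Since `sSup` of a set that is not bounded above is `0`, the inequality also needs the set to be
bounded. Off `0`, `S_f = p' - p²/2` for the pre-Schwarzian `p = f''/f' = c L²/z`, and
`|L|² ≤ log²(2/(1-|z|)) + π²/4` grows more slowly than `(1-|z|)⁻¹`, so `(1-|z|²)² |S_f|` stays
bounded near the circle; on `|z| ≤ 1/2` continuity suffices.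
-/

open Metric Filter Topology

section Schwarzian

variable {𝕜 : Type*} [NontriviallyNormedField 𝕜]

noncomputable def schwarzian (f : 𝕜 → 𝕜) (z : 𝕜) : 𝕜 :=
  deriv (deriv (deriv f)) z / deriv f z - (3 / 2) * (deriv (deriv f) z / deriv f z) ^ 2

theorem schwarzian_eq_of_hasDerivAt [CharZero 𝕜] {f p : 𝕜 → 𝕜} {p' z : 𝕜}
    (h₁ : DifferentiableAt 𝕜 (deriv f) z) (h₂ : DifferentiableAt 𝕜 (deriv (deriv f)) z)
    (h₀ : deriv f z ≠ 0) (hp : HasDerivAt p p' z) (hfp : deriv (deriv f) / deriv f =ᶠ[𝓝 z] p) :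
    schwarzian f z = p' - 1 / 2 * p z ^ 2 := by
  have hquot := (h₂.hasDerivAt.div h₁.hasDerivAt h₀).deriv
  rw [hfp.deriv_eq, hp.deriv] at hquot
  rw [schwarzian, ← hfp.eq_of_nhds, hquot, Pi.div_apply]
  field_simp
  ring

theorem tendsto_inv_mul_of_hasDerivAt_zero {L : 𝕜 → 𝕜} {a : 𝕜} (hL : HasDerivAt L a 0)
    (hL₀ : L 0 = 0) : Tendsto (fun z ↦ z⁻¹ * L z) (𝓝[≠] 0) (𝓝 a) := by
  simpa [hL₀] using hasDerivAt_iff_tendsto_slope_zero.1 hL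

theorem eq_zero_and_deriv_eq_of_mul_eq_sq_mul {u v L : 𝕜 → 𝕜} {a c : 𝕜}
    (hu : ContinuousAt u 0) (hv : DifferentiableAt 𝕜 v 0) (hL : HasDerivAt L a 0) (hL₀ : L 0 = 0)
    (hode : ∀ᶠ z in 𝓝 0, z * v z = c * L z ^ 2 * u z) :
    v 0 = 0 ∧ deriv v 0 = c * a ^ 2 * u 0 := by
  have hslope := tendsto_inv_mul_of_hasDerivAt_zero hL hL₀
  have hode' : ∀ᶠ z in 𝓝[≠] 0, v z = c * (z⁻¹ * L z) * L z * u z := by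
    filter_upwards [self_mem_nhdsWithin, nhdsWithin_le_nhds hode] with z hz h
    have hz : z ≠ 0 := hz
    field_simp
    linear_combination h
  have hu' : Tendsto u (𝓝[≠] 0) (𝓝 (u 0)) := hu.tendsto.mono_left nhdsWithin_le_nhds
  have hv₀ : v 0 = 0 := by
    have h : Tendsto v (𝓝[≠] 0) (𝓝 (c * a * L 0 * u 0)) :=
      (((tendsto_const_nhds.mul hslope).mul
        (hL.continuousAt.tendsto.mono_left nhdsWithin_le_nhds)).mul hu').congr'
        (hode'.mono fun _ h ↦ h.symm)
    simpa [hL₀] using tendsto_nhds_unique (hv.continuousAt.tendsto.mono_left nhdsWithin_le_nhds) h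
  refine ⟨hv₀, tendsto_nhds_unique (tendsto_inv_mul_of_hasDerivAt_zero hv.hasDerivAt hv₀) ?_⟩
  refine ((tendsto_const_nhds.mul (hslope.pow 2)).mul hu').congr' ?_
  filter_upwards [hode'] with z h
  rw [h]
  ring

end Schwarzian

theorem continuousOn_schwarzian {f : ℂ → ℂ} {U : Set ℂ} (hU : IsOpen U)
    (hf : DifferentiableOn ℂ f U) (hf' : ∀ z ∈ U, deriv f z ≠ 0) :
    ContinuousOn (schwarzian f) U := by
  have h₁ := (hf.analyticOnNhd hU).deriv
  have h₂ := h₁.deriv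
  exact (h₂.deriv.continuousOn.div h₁.continuousOn hf').sub
    (continuousOn_const.mul ((h₂.continuousOn.div h₁.continuousOn hf').pow 2))

theorem bddAbove_image_ball_of_le {E : Type*} [NormedAddCommGroup E] [ProperSpace E]
    {φ : E → ℝ} {ρ R B : ℝ} (hρ : ρ < R) (hφ : ContinuousOn φ (ball 0 R))
    (hB : ∀ z ∈ ball 0 R, ρ < ‖z‖ → φ z ≤ B) : BddAbove (φ '' ball 0 R) := by
  obtain ⟨C, hC⟩ := (isCompact_closedBall (0 : E) ρ).bddAbove_image
    (hφ.mono (closedBall_subset_ball hρ))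
  refine ⟨max C B, ?_⟩
  rintro _ ⟨z, hz, rfl⟩
  rcases le_or_gt ‖z‖ ρ with hzρ | hzρ
  · exact (hC ⟨z, mem_closedBall_zero_iff.2 hzρ, rfl⟩).trans (le_max_left _ _)
  · exact (hB z hz hzρ).trans (le_max_right _ _)

theorem Real.sq_log_le_four_mul {u : ℝ} (hu : 1 ≤ u) : Real.log u ^ 2 ≤ 4 * u := by
  have hsqrt : Real.log u ≤ 2 * √u := by
    have := Real.log_le_sub_one_of_pos (Real.sqrt_pos.2 (by linarith : (0 : ℝ) < u))
    rw [Real.log_sqrt (by linarith)] at this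
    linarith
  have := pow_le_pow_left₀ (Real.log_nonneg hu) hsqrt 2
  rw [mul_pow, Real.sq_sqrt (by linarith)] at this
  linarith

theorem one_sub_ne_zero_of_norm_lt_one {z : ℂ} (hz : ‖z‖ < 1) : 1 - z ≠ 0 := by
  rintro h
  simp [← sub_eq_zero.1 h] at hz

noncomputable def logCayley (z : ℂ) : ℂ := Complex.log ((1 + z) / (1 - z))

theorem logCayley_zero : logCayley 0 = 0 := by simp [logCayley]

theorem re_cayley_pos {z : ℂ} (hz : ‖z‖ < 1) : 0 < ((1 + z) / (1 - z)).re := by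
  have hnorm : z.re ^ 2 + z.im ^ 2 < 1 := by
    rw [← sq_lt_one_iff₀ (norm_nonneg z), Complex.sq_norm, Complex.normSq_apply] at hz
    nlinarith
  rw [Complex.div_re, ← add_div]
  apply div_pos _ (Complex.normSq_pos.2 (one_sub_ne_zero_of_norm_lt_one hz))
  simp only [Complex.add_re, Complex.add_im, Complex.one_re, Complex.one_im, Complex.sub_re,
    Complex.sub_im]
  nlinarith

theorem hasDerivAt_logCayley {z : ℂ} (hz : ‖z‖ < 1) :
    HasDerivAt logCayley (2 / (1 - z ^ 2)) z := by
  have h₁ := one_sub_ne_zero_of_norm_lt_one hz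
  have h₂ : 1 + z ≠ 0 := by
    simpa using one_sub_ne_zero_of_norm_lt_one (z := -z) (by simpa using hz)
  have hq : HasDerivAt (fun w ↦ (1 + w) / (1 - w))
      ((1 * (1 - z) - (1 + z) * (-1)) / (1 - z) ^ 2) z :=
    ((hasDerivAt_id z).const_add 1).div ((hasDerivAt_id z).const_sub 1) h₁ |>.congr_deriv (by simp)
  have h₃ : 1 - z ^ 2 ≠ 0 := by
    rw [show 1 - z ^ 2 = (1 - z) * (1 + z) by ring]
    exact mul_ne_zero h₁ h₂
  refine (hq.clog (Or.inl (re_cayley_pos hz))).congr_deriv ?_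
  field_simp
  ring

theorem norm_cayley_le {z : ℂ} (hz : ‖z‖ < 1) : ‖(1 + z) / (1 - z)‖ ≤ 2 / (1 - ‖z‖) := by
  have hnum : ‖1 + z‖ ≤ 2 := by
    have := norm_add_le (1 : ℂ) z
    rw [norm_one] at this
    linarith
  have hden : 1 - ‖z‖ ≤ ‖1 - z‖ := by simpa using norm_sub_norm_le (1 : ℂ) z
  rw [norm_div]
  exact div_le_div₀ zero_le_two hnum (by linarith) hden

theorem sq_norm_logCayley_le {z : ℂ} (hz : ‖z‖ < 1) :
    ‖logCayley z‖ ^ 2 ≤ Real.log (2 / (1 - ‖z‖)) ^ 2 + (Real.pi / 2) ^ 2 := by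
  set w := (1 + z) / (1 - z) with hw_def
  have hw_re : 0 < w.re := re_cayley_pos hz
  have hw : w ≠ 0 := by
    rintro h
    simp [h] at hw_re
  have hw_le : ‖w‖ ≤ 2 / (1 - ‖z‖) := norm_cayley_le hz
  have hw_inv_le : ‖w⁻¹‖ ≤ 2 / (1 - ‖z‖) := by
    simpa [hw_def, add_comm, sub_eq_add_neg] using norm_cayley_le (z := -z) (by simpa using hz)
  have hre : |Real.log ‖w‖| ≤ Real.log (2 / (1 - ‖z‖)) := by
    rw [abs_le, neg_le, ← Real.log_inv, ← norm_inv]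
    exact ⟨Real.log_le_log (by simpa using hw) hw_inv_le, Real.log_le_log (by simpa using hw) hw_le⟩
  have him : |Complex.arg w| ≤ Real.pi / 2 := Complex.abs_arg_le_pi_div_two_iff.2 hw_re.le
  rw [Complex.sq_norm, Complex.normSq_apply, logCayley, Complex.log_re, Complex.log_im, ← sq, ← sq,
    ← sq_abs (Real.log _), ← sq_abs (Complex.arg _)]
  gcongr

theorem one_sub_norm_mul_sq_norm_logCayley_le {z : ℂ} (hz : ‖z‖ < 1) :
    (1 - ‖z‖) * ‖logCayley z‖ ^ 2 ≤ 11 := by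
  have ht : 0 < 1 - ‖z‖ := by linarith
  have ht₁ : 1 - ‖z‖ ≤ 1 := by linarith [norm_nonneg z]
  have hlog : (1 - ‖z‖) * Real.log (2 / (1 - ‖z‖)) ^ 2 ≤ 8 := by
    have := Real.sq_log_le_four_mul (u := 2 / (1 - ‖z‖)) (by rw [le_div_iff₀ ht]; linarith)
    calc (1 - ‖z‖) * Real.log (2 / (1 - ‖z‖)) ^ 2 ≤ (1 - ‖z‖) * (4 * (2 / (1 - ‖z‖))) := by gcongr
      _ = 8 := by field_simp; ring
  have hpi : (1 - ‖z‖) * (Real.pi / 2) ^ 2 ≤ 3 := by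
    nlinarith [Real.pi_lt_d2, Real.pi_pos, mul_le_mul_of_nonneg_right ht₁ (sq_nonneg (Real.pi / 2))]
  nlinarith [mul_le_mul_of_nonneg_left (sq_norm_logCayley_le hz) ht.le]

theorem norm_mul_sub_sub_div_sq_le {z ℓ c : ℂ} (hz : ‖z‖ < 1) (hz₀ : z ≠ 0) :
    ‖c * (4 * ℓ * z / (1 - z ^ 2) - ℓ ^ 2 - c / 2 * ℓ ^ 4) / z ^ 2‖
      ≤ ‖c‖ * (4 * ‖ℓ‖ * ‖z‖ / (1 - ‖z‖ ^ 2) + ‖ℓ‖ ^ 2 + ‖c‖ / 2 * ‖ℓ‖ ^ 4) / ‖z‖ ^ 2 := by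
  have hu : 0 < 1 - ‖z‖ ^ 2 := by nlinarith [norm_nonneg z]
  have hden : 1 - ‖z‖ ^ 2 ≤ ‖1 - z ^ 2‖ := by
    have := norm_sub_norm_le (1 : ℂ) (z ^ 2)
    rwa [norm_one, norm_pow] at this
  rw [norm_div, norm_mul, norm_pow]
  gcongr
  calc ‖4 * ℓ * z / (1 - z ^ 2) - ℓ ^ 2 - c / 2 * ℓ ^ 4‖
      ≤ ‖4 * ℓ * z / (1 - z ^ 2)‖ + ‖ℓ ^ 2‖ + ‖c / 2 * ℓ ^ 4‖ :=
        (norm_sub_le _ _).trans (add_le_add_left (norm_sub_le _ _) _)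
    _ ≤ 4 * ‖ℓ‖ * ‖z‖ / (1 - ‖z‖ ^ 2) + ‖ℓ‖ ^ 2 + ‖c‖ / 2 * ‖ℓ‖ ^ 4 := by
        simp only [norm_div, norm_mul, norm_pow, RCLike.norm_ofNat]
        gcongr

theorem sq_one_sub_sq_mul_le_of_one_sub_mul_sq_le {r ℓ s K : ℝ} (hr : 1 / 2 ≤ r) (hr₁ : r < 1)
    (hℓ : 0 ≤ ℓ) (hs : 0 ≤ s) (hK : (1 - r) * ℓ ^ 2 ≤ K) :
    (1 - r ^ 2) ^ 2 * (s * (4 * ℓ * r / (1 - r ^ 2) + ℓ ^ 2 + s / 2 * ℓ ^ 4) / r ^ 2)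
      ≤ 4 * s * (4 * (1 + K) + 4 * K + 2 * s * K ^ 2) := by
  have ht : 0 < 1 - r := by linarith
  have hu : 0 < 1 - r ^ 2 := by nlinarith
  have hK₀ : 0 ≤ K := le_trans (by positivity) hK
  have h₁ : 4 * ℓ * r * (1 - r ^ 2) ≤ 4 * (1 + K) := by
    nlinarith [mul_nonneg hℓ ht.le, mul_nonneg (mul_nonneg hℓ ht.le) (sub_nonneg.2 hr₁.le),
      sq_nonneg (ℓ - 1), mul_nonneg ht.le (sq_nonneg (ℓ - 1))]
  have hsq : (1 - r ^ 2) ^ 2 ≤ 4 * (1 - r) ^ 2 := by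
    have : (1 + r) ^ 2 ≤ 2 ^ 2 := pow_le_pow_left₀ (by linarith) (by linarith) 2
    nlinarith [mul_le_mul_of_nonneg_left this (sq_nonneg (1 - r))]
  have h₂ : (1 - r ^ 2) ^ 2 * ℓ ^ 2 ≤ 4 * K := by
    nlinarith [mul_le_mul_of_nonneg_right hsq (sq_nonneg ℓ), mul_nonneg ht.le (sq_nonneg ℓ)]
  have h₃ : (1 - r ^ 2) ^ 2 * ℓ ^ 4 ≤ 4 * K ^ 2 := by
    have := pow_le_pow_left₀ (by positivity) hK 2
    nlinarith [mul_le_mul_of_nonneg_right hsq (pow_nonneg (sq_nonneg ℓ) 2)]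
  have hr_inv : s / r ^ 2 ≤ 4 * s := by
    rw [div_le_iff₀ (by positivity)]
    nlinarith [mul_le_mul_of_nonneg_left (show 1 / 4 ≤ r ^ 2 by nlinarith) hs]
  calc (1 - r ^ 2) ^ 2 * (s * (4 * ℓ * r / (1 - r ^ 2) + ℓ ^ 2 + s / 2 * ℓ ^ 4) / r ^ 2)
      = s / r ^ 2 * (4 * ℓ * r * (1 - r ^ 2) + (1 - r ^ 2) ^ 2 * ℓ ^ 2
          + s / 2 * ((1 - r ^ 2) ^ 2 * ℓ ^ 4)) := by
        field_simp
    _ ≤ 4 * s * (4 * (1 + K) + 4 * K + s / 2 * (4 * K ^ 2)) := by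
        have : 0 ≤ 4 * ℓ * r * (1 - r ^ 2) := mul_nonneg (by positivity) hu.le
        gcongr
    _ = 4 * s * (4 * (1 + K) + 4 * K + 2 * s * K ^ 2) := by ring

theorem schwarzian_eq_of_mul_deriv_deriv_eq {f : ℂ → ℂ} {c z : ℂ}
    (hf : DifferentiableOn ℂ f (ball 0 1)) (hf' : ∀ w ∈ ball (0 : ℂ) 1, deriv f w ≠ 0)
    (hode : ∀ w ∈ ball (0 : ℂ) 1, w * deriv (deriv f) w = c * logCayley w ^ 2 * deriv f w)
    (hz : z ∈ ball (0 : ℂ) 1) (hz₀ : z ≠ 0) :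
    schwarzian f z = c * (4 * logCayley z * z / (1 - z ^ 2) - logCayley z ^ 2
      - c / 2 * logCayley z ^ 4) / z ^ 2 := by
  have hz₁ : ‖z‖ < 1 := mem_ball_zero_iff.1 hz
  have h₁ := (hf.analyticOnNhd isOpen_ball).deriv
  have hp : HasDerivAt (fun w ↦ c * logCayley w ^ 2 / w)
      ((c * (2 * logCayley z ^ 1 * (2 / (1 - z ^ 2))) * z - c * logCayley z ^ 2 * 1) / z ^ 2) z :=
    (((hasDerivAt_logCayley hz₁).pow 2).const_mul c).div (hasDerivAt_id z) hz₀
  have hfp : deriv (deriv f) / deriv f =ᶠ[𝓝 z] fun w ↦ c * logCayley w ^ 2 / w := by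
    filter_upwards [(isOpen_ball.sdiff isClosed_singleton).mem_nhds ⟨hz, hz₀⟩] with w ⟨hw, hw₀⟩
    have hw₀ : w ≠ 0 := hw₀
    rw [Pi.div_apply, div_eq_div_iff (hf' w hw) hw₀, ← hode w hw]
    ring
  have hz₂ : 1 - z ^ 2 ≠ 0 :=
    one_sub_ne_zero_of_norm_lt_one (by simpa using pow_lt_one₀ (norm_nonneg z) hz₁ two_ne_zero)
  rw [schwarzian_eq_of_hasDerivAt (h₁ z hz).differentiableAt (h₁.deriv z hz).differentiableAt
    (hf' z hz) hp hfp]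
  field_simp
  ring

theorem sq_one_sub_sq_mul_norm_schwarzian_le {f : ℂ → ℂ} {c z : ℂ}
    (hf : DifferentiableOn ℂ f (ball 0 1)) (hf' : ∀ w ∈ ball (0 : ℂ) 1, deriv f w ≠ 0)
    (hode : ∀ w ∈ ball (0 : ℂ) 1, w * deriv (deriv f) w = c * logCayley w ^ 2 * deriv f w)
    (hz : z ∈ ball (0 : ℂ) 1) (hz₁ : 1 / 2 < ‖z‖) :
    (1 - ‖z‖ ^ 2) ^ 2 * ‖schwarzian f z‖
      ≤ 4 * ‖c‖ * (92 + 242 * ‖c‖) := by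
  have hz' : ‖z‖ < 1 := mem_ball_zero_iff.1 hz
  have hz₀ : z ≠ 0 := norm_pos_iff.1 (by linarith)
  rw [schwarzian_eq_of_mul_deriv_deriv_eq hf hf' hode hz hz₀]
  calc _ ≤ (1 - ‖z‖ ^ 2) ^ 2 * (‖c‖ * (4 * ‖logCayley z‖ * ‖z‖ / (1 - ‖z‖ ^ 2)
        + ‖logCayley z‖ ^ 2 + ‖c‖ / 2 * ‖logCayley z‖ ^ 4) / ‖z‖ ^ 2) := by
        gcongr
        exact norm_mul_sub_sub_div_sq_le hz' hz₀
    _ ≤ _ := (sq_one_sub_sq_mul_le_of_one_sub_mul_sq_le hz₁.le hz' (norm_nonneg _) (norm_nonneg _)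
        (one_sub_norm_mul_sq_norm_logCayley_le hz')).trans_eq (by ring)

theorem schwarzian_norm_sharp_uniformly_convex_general (f : ℂ → ℂ)
    (hf : DifferentiableOn ℂ f (ball (0:ℂ) 1))
    (hf1 : deriv f 0 = 1)
    (hf' : ∀ z ∈ ball (0:ℂ) 1, deriv f z ≠ 0)
    (hode : ∀ z ∈ ball (0:ℂ) 1,
      1 + z * deriv (deriv f) z / deriv f z
        = 1 + ((2 / Real.pi ^ 2 : ℝ) : ℂ) * (Complex.log ((1 + z) / (1 - z))) ^ 2) :
    (deriv (deriv (deriv f)) 0 / deriv f 0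
        - (3 / 2) * (deriv (deriv f) 0 / deriv f 0) ^ 2 = ((8 / Real.pi ^ 2 : ℝ) : ℂ)) ∧
    8 / Real.pi ^ 2 ≤ sSup {r : ℝ | ∃ z ∈ ball (0:ℂ) 1,
      r = (1 - ‖z‖ ^ 2) ^ 2 *
        ‖(deriv (deriv (deriv f)) z / deriv f z
          - (3 / 2) * (deriv (deriv f) z / deriv f z) ^ 2)‖} := by
  set c : ℂ := ((2 / Real.pi ^ 2 : ℝ) : ℂ) with hc
  have hode' : ∀ z ∈ ball (0 : ℂ) 1, z * deriv (deriv f) z = c * logCayley z ^ 2 * deriv f z := by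
    intro z hz
    rw [← div_eq_iff (hf' z hz), ← add_right_inj 1, hode z hz, logCayley]
  have h₀ : (0 : ℂ) ∈ ball (0 : ℂ) 1 := mem_ball_self one_pos
  have hA := (hf.analyticOnNhd isOpen_ball).deriv
  obtain ⟨h₂, h₃⟩ := eq_zero_and_deriv_eq_of_mul_eq_sq_mul (hA 0 h₀).continuousAt
    (hA.deriv 0 h₀).differentiableAt (hasDerivAt_logCayley (by simp)) logCayley_zero
    (eventually_of_mem (isOpen_ball.mem_nhds h₀) hode')
  have hS₀ : schwarzian f 0 = ((8 / Real.pi ^ 2 : ℝ) : ℂ) := by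
    rw [schwarzian, h₂, h₃, hf1, hc]
    push_cast
    ring
  have hbdd : BddAbove ((fun z ↦ (1 - ‖z‖ ^ 2) ^ 2 * ‖schwarzian f z‖) '' ball 0 1) :=
    bddAbove_image_ball_of_le (by norm_num : (1 / 2 : ℝ) < 1)
      ((by fun_prop : Continuous fun z : ℂ ↦ (1 - ‖z‖ ^ 2) ^ 2).continuousOn.mul
        (continuousOn_schwarzian isOpen_ball hf hf').norm)
      (fun z hz hz₁ ↦ sq_one_sub_sq_mul_norm_schwarzian_le hf hf' hode' hz hz₁)
  refine ⟨hS₀, le_csSup (hbdd.mono ?_) ⟨0, h₀, ?_⟩⟩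
  · rintro _ ⟨z, hz, rfl⟩
    exact ⟨z, hz, rfl⟩
  · rw [← schwarzian, hS₀]
    simp

/-- Sharpness of the bound `‖S_f‖ ≤ 8/π²` for uniformly convex functions:
the function `f₀` with `1 + z f₀''/f₀' = 1 + (2/π²)(Log((1+z)/(1-z)))²` satisfies
`S_{f₀}(0) = 8/π²`, and hence `sup_{z∈𝔻} (1-|z|²)² |S_{f₀}(z)| ≥ 8/π²`. -/
theorem schwarzian_norm_sharp_uniformly_convex (f : ℂ → ℂ)
    (hf : DifferentiableOn ℂ f (ball (0:ℂ) 1))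
    (hf0 : f 0 = 0) (hf1 : deriv f 0 = 1)
    (hf' : ∀ z ∈ ball (0:ℂ) 1, deriv f z ≠ 0)
    (hode : ∀ z ∈ ball (0:ℂ) 1,
      1 + z * deriv (deriv f) z / deriv f z
        = 1 + ((2 / Real.pi ^ 2 : ℝ) : ℂ) * (Complex.log ((1 + z) / (1 - z))) ^ 2) :
    (deriv (deriv (deriv f)) 0 / deriv f 0
        - (3 / 2) * (deriv (deriv f) 0 / deriv f 0) ^ 2 = ((8 / Real.pi ^ 2 : ℝ) : ℂ)) ∧
    8 / Real.pi ^ 2 ≤ sSup {r : ℝ | ∃ z ∈ ball (0:ℂ) 1,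
      r = (1 - ‖z‖ ^ 2) ^ 2 *
        ‖(deriv (deriv (deriv f)) z / deriv f z
          - (3 / 2) * (deriv (deriv f) z / deriv f z) ^ 2)‖} :=
  schwarzian_norm_sharp_uniformly_convex_general f hf hf1 hf' hode
end

section
/- For 0 < α ≤ 1, the function Q_α(z) = 2z P_α'(z) + 1 − P_α(z)², where P_α(z) = ((1+z)/(1−z))^α (principal branch), has all Taylor coefficients about z = 0 nonnegative (real and ≥ 0). -/
/-!
`P_β` solves `(1 - z²) P_β' = 2β P_β`, so its derivatives `d_n(β)` at `0` obey
`d_{n+2} = 2β d_{n+1} + (n+1) n d_n`. Since `P_α² = P_{2α}`, the `(n+1)`-st derivative of `Q_α`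
at `0` is `2(n+1) d_{n+1}(α) - d_{n+1}(2α)`. For `0 ≤ α ≤ 1` a two-step induction on the
recurrence gives `α d_{n+2}(α) ≤ (n+2) d_{n+1}(α)`, and this is exactly the slack needed in a
second two-step induction proving `d_{n+1}(2α) ≤ 2(n+1) d_{n+1}(α)`.
-/

open Complex Metric Filter Topology

lemma iteratedDeriv_pow_mul_zero {𝕜 : Type*} [NontriviallyNormedField 𝕜] {g : 𝕜 → 𝕜}
    {n : ℕ} (hg : ContDiffAt 𝕜 n g 0) (k : ℕ) :
    iteratedDeriv n (fun z ↦ z ^ k * g z) 0 = n.descFactorial k * iteratedDeriv (n - k) g 0 := by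
  rw [iteratedDeriv_fun_mul (by fun_prop) hg]
  simp only [iteratedDeriv_fun_pow_zero]
  rw [Finset.sum_eq_single k]
  · simp [Nat.descFactorial_eq_factorial_mul_choose, mul_comm]
  · intro i _ hik
    simp [hik]
  · intro hk
    simp [Nat.choose_eq_zero_of_lt (by simpa using hk : n < k)]

noncomputable def cayleyPowDerivSeq (β : ℝ) : ℕ → ℝ
  | 0 => 1
  | 1 => 2 * β
  | n + 2 => 2 * β * cayleyPowDerivSeq β (n + 1) + (n + 1) * n * cayleyPowDerivSeq β n

section cayleyPowDerivSeq

variable {β : ℝ}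

lemma cayleyPowDerivSeq_add_two (n : ℕ) :
    cayleyPowDerivSeq β (n + 2) =
      2 * β * cayleyPowDerivSeq β (n + 1) + (n + 1) * n * cayleyPowDerivSeq β n :=
  rfl

lemma cayleyPowDerivSeq_nonneg (hβ : 0 ≤ β) (n : ℕ) : 0 ≤ cayleyPowDerivSeq β n := by
  induction n using Nat.twoStepInduction with
  | zero => simp [cayleyPowDerivSeq]
  | one => simp [cayleyPowDerivSeq, hβ]
  | more n h₀ h₁ => rw [cayleyPowDerivSeq_add_two]; positivity

lemma mul_cayleyPowDerivSeq_succ_le (hβ₀ : 0 ≤ β) (hβ₁ : β ≤ 1) (n : ℕ) :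
    β * cayleyPowDerivSeq β (n + 2) ≤ (n + 2) * cayleyPowDerivSeq β (n + 1) := by
  have hβsq : 0 ≤ 1 - β ^ 2 := by nlinarith
  induction n using Nat.twoStepInduction with
  | zero => simp [cayleyPowDerivSeq]; nlinarith
  | one => simp [cayleyPowDerivSeq]; nlinarith [mul_nonneg (sq_nonneg β) hβsq]
  | more n ih _ =>
    have h₄ := cayleyPowDerivSeq_add_two (β := β) (n + 2)
    have h₃ := cayleyPowDerivSeq_add_two (β := β) (n + 1)
    push_cast at ih h₃ h₄ ⊢
    nlinarith [mul_le_mul_of_nonneg_left ih (by positivity : (0 : ℝ) ≤ (n + 2) * (n + 1)),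
      mul_nonneg hβsq (cayleyPowDerivSeq_nonneg hβ₀ (n + 3))]

lemma cayleyPowDerivSeq_two_mul_le (hβ₀ : 0 ≤ β) (hβ₁ : β ≤ 1) (n : ℕ) :
    cayleyPowDerivSeq (2 * β) (n + 1) ≤ 2 * (n + 1) * cayleyPowDerivSeq β (n + 1) := by
  induction n using Nat.twoStepInduction with
  | zero => simp [cayleyPowDerivSeq]
  | one => simp [cayleyPowDerivSeq]; linarith
  | more n ih₀ ih₁ =>
    have hE := cayleyPowDerivSeq_add_two (β := 2 * β) (n + 1)
    have hD := cayleyPowDerivSeq_add_two (β := β) (n + 1)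
    push_cast at ih₀ ih₁ hE hD ⊢
    nlinarith [mul_le_mul_of_nonneg_left ih₁ (by positivity : (0 : ℝ) ≤ 2 * (2 * β)),
      mul_le_mul_of_nonneg_left ih₀ (by positivity : (0 : ℝ) ≤ (n + 2) * (n + 1)),
      mul_le_mul_of_nonneg_left (mul_cayleyPowDerivSeq_succ_le hβ₀ hβ₁ n)
        (by positivity : (0 : ℝ) ≤ 4 * (n + 1))]

end cayleyPowDerivSeq

-- `cayleyPow β` and `cayleyPowQ β` are the `P_β` and `Q_β` of the statement.
noncomputable def cayleyPow (β z : ℂ) : ℂ := exp (β * log ((1 + z) / (1 - z)))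

noncomputable def cayleyPowQ (β z : ℂ) : ℂ :=
  2 * z * deriv (cayleyPow β) z + 1 - cayleyPow β z ^ 2

lemma one_add_div_one_sub_mem_slitPlane {z : ℂ} (hz : ‖z‖ < 1) :
    (1 + z) / (1 - z) ∈ slitPlane := by
  have h₁ : 1 - z ≠ 0 := sub_ne_zero.2 (by rintro rfl; simp at hz)
  have hsq : z.re * z.re + z.im * z.im < 1 := by
    rw [← normSq_apply, normSq_eq_norm_sq]; nlinarith [norm_nonneg z]
  refine mem_slitPlane_iff.2 (Or.inl ?_)
  rw [div_re, ← add_div]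
  exact div_pos (by simp; nlinarith) (normSq_pos.2 h₁)

lemma one_sub_sq_ne_zero_of_norm_lt_one {z : ℂ} (hz : ‖z‖ < 1) : 1 - z ^ 2 ≠ 0 := by
  intro h
  have : ‖z‖ ^ 2 = 1 := by rw [← norm_pow, ← sub_eq_zero.1 h, norm_one]
  nlinarith [norm_nonneg z]

lemma hasDerivAt_cayleyPow (β : ℂ) {z : ℂ} (hz : ‖z‖ < 1) :
    HasDerivAt (cayleyPow β) (2 * β * cayleyPow β z / (1 - z ^ 2)) z := by
  have h := one_sub_sq_ne_zero_of_norm_lt_one hz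
  obtain ⟨h₁, h₂⟩ : 1 - z ≠ 0 ∧ 1 + z ≠ 0 :=
    mul_ne_zero_iff.1 (by rwa [show 1 - z ^ 2 = (1 - z) * (1 + z) by ring] at h)
  refine (((((hasDerivAt_id' z).const_add 1).fun_div ((hasDerivAt_id' z).const_sub 1) h₁).clog
    (one_add_div_one_sub_mem_slitPlane hz)).const_mul β).cexp.congr_deriv ?_
  unfold cayleyPow
  field_simp
  ring

lemma one_sub_sq_mul_deriv_cayleyPow (β : ℂ) {z : ℂ} (hz : ‖z‖ < 1) :
    (1 - z ^ 2) * deriv (cayleyPow β) z = 2 * β * cayleyPow β z := by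
  rw [(hasDerivAt_cayleyPow β hz).deriv,
    mul_div_cancel₀ _ (one_sub_sq_ne_zero_of_norm_lt_one hz)]

lemma analyticAt_cayleyPow (β : ℂ) {z : ℂ} (hz : ‖z‖ < 1) :
    AnalyticAt ℂ (cayleyPow β) z :=
  DifferentiableOn.analyticAt (s := ball 0 1)
    (fun _ hw ↦ (hasDerivAt_cayleyPow β (mem_ball_zero_iff.1 hw)).differentiableAt
      |>.differentiableWithinAt)
    (isOpen_ball.mem_nhds (mem_ball_zero_iff.2 hz))

lemma cayleyPow_sq (β z : ℂ) : cayleyPow β z ^ 2 = cayleyPow (2 * β) z := by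
  rw [cayleyPow, cayleyPow, ← exp_nat_mul]; ring_nf

lemma iteratedDeriv_cayleyPow_add_two (β : ℂ) (n : ℕ) :
    iteratedDeriv (n + 2) (cayleyPow β) 0 =
      2 * β * iteratedDeriv (n + 1) (cayleyPow β) 0 +
        (n + 1) * n * iteratedDeriv n (cayleyPow β) 0 := by
  have hP := analyticAt_cayleyPow β (z := 0) (by simp)
  have hode : deriv (cayleyPow β) =ᶠ[𝓝 0]
      fun z ↦ 2 * β * cayleyPow β z + z ^ 2 * deriv (cayleyPow β) z := by
    filter_upwards [isOpen_ball.mem_nhds (mem_ball_self one_pos)] with z hz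
    linear_combination one_sub_sq_mul_deriv_cayleyPow β (mem_ball_zero_iff.1 hz)
  have hP₀ := hP.contDiffAt (n := n + 1)
  have hP₁ := hP.deriv.contDiffAt (n := n + 1)
  rw [iteratedDeriv_succ', hode.iteratedDeriv_eq,
    iteratedDeriv_fun_add (by fun_prop) (by fun_prop), iteratedDeriv_const_mul_field,
    iteratedDeriv_pow_mul_zero hP₁]
  rcases n with _ | m
  · simp
  · beta_reduce
    rw [show m + 1 + 1 - 2 = m by omega, ← iteratedDeriv_succ', Nat.cast_descFactorial_two]
    push_cast
    ring

lemma iteratedDeriv_cayleyPow_zero (β : ℝ) (n : ℕ) :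
    iteratedDeriv n (cayleyPow β) 0 = cayleyPowDerivSeq β n := by
  induction n using Nat.twoStepInduction with
  | zero => simp [cayleyPow, cayleyPowDerivSeq]
  | one =>
    rw [iteratedDeriv_one, (hasDerivAt_cayleyPow β (by simp)).deriv]
    simp [cayleyPow, cayleyPowDerivSeq]
  | more n h₀ h₁ =>
    rw [iteratedDeriv_cayleyPow_add_two, h₀, h₁, cayleyPowDerivSeq_add_two]
    push_cast
    ring

lemma iteratedDeriv_succ_cayleyPowQ_zero (β : ℂ) (n : ℕ) :
    iteratedDeriv (n + 1) (cayleyPowQ β) 0 =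
      2 * (n + 1) * iteratedDeriv (n + 1) (cayleyPow β) 0 -
        iteratedDeriv (n + 1) (cayleyPow (2 * β)) 0 := by
  have hP := (analyticAt_cayleyPow β (z := 0) (by simp)).deriv.contDiffAt (n := n + 1)
  have hP₂ := (analyticAt_cayleyPow (2 * β) (z := 0) (by simp)).contDiffAt (n := n + 1)
  have hQ : cayleyPowQ β =
      fun z ↦ 2 * (z ^ 1 * deriv (cayleyPow β) z) + (1 - cayleyPow (2 * β) z) := by
    funext z
    rw [cayleyPowQ, cayleyPow_sq]
    ring
  rw [hQ, iteratedDeriv_fun_add (by fun_prop) (by fun_prop), iteratedDeriv_const_mul_field,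
    iteratedDeriv_pow_mul_zero hP, iteratedDeriv_const_sub n.succ_pos, iteratedDeriv_neg,
    Nat.add_sub_cancel, ← iteratedDeriv_succ', Nat.descFactorial_one]
  push_cast
  ring

/-- For `0 < α ≤ 1`, the function `Q_α(z) = 2z P_α'(z) + 1 - P_α(z)²`, where
`P_α(z) = ((1+z)/(1-z))^α` (principal branch), has all Taylor coefficients about `0`
real and nonnegative; equivalently, all iterated derivatives at `0` are nonnegative reals. -/
theorem Qalpha_coeff_nonneg (α : ℝ) (hα0 : 0 < α) (hα1 : α ≤ 1) (n : ℕ) :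
    ∃ r : ℝ, 0 ≤ r ∧
      iteratedDeriv n
        (fun z : ℂ =>
          2 * z * deriv (fun ζ : ℂ =>
              Complex.exp ((α : ℂ) * Complex.log ((1 + ζ) / (1 - ζ)))) z
            + 1
            - Complex.exp ((α : ℂ) * Complex.log ((1 + z) / (1 - z))) ^ 2) 0
        = (r : ℂ) := by
  cases n with
  | zero => exact ⟨0, le_rfl, by simp⟩
  | succ n =>
    refine ⟨2 * (n + 1) * cayleyPowDerivSeq α (n + 1) - cayleyPowDerivSeq (2 * α) (n + 1),
      sub_nonneg.2 (cayleyPowDerivSeq_two_mul_le hα0.le hα1 n), ?_⟩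
    refine (iteratedDeriv_succ_cayleyPowQ_zero α n).trans ?_
    rw [show (2 : ℂ) * α = (2 * α : ℝ) by push_cast; ring, iteratedDeriv_cayleyPow_zero,
      iteratedDeriv_cayleyPow_zero]
    push_cast
    ring
end
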